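/- arXiv:2002.10047 — 6 statements merged into one kernel-verified Lean document; each statement's English description precedes it below -/
import Mathlib

section
/- Let G be a finite simple graph on n vertices with arboricity at most α (the edge set of G partitions into at most α forests), where α ≥ 1 is an integer, and let ε > 0 be a real number. Define a sequence of induced subgraphs by G_0 = G and G_{i+1} = the induced subgraph of G_i on the set of vertices whose degree in G_i is at least (2+ε)·α. Then for every i, |V(G_{i+1})| ≤ (2/(2+ε))·|V(G_i)|; consequently, G_t has no vertices for every t with (2/(2+ε))^t · n < 1, so the peeling process empties the graph within ⌈log n / log((2+ε)/2)⌉ rounds. -/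
/-!
A forest on `k` vertices has at most `k` edges, so a graph covered by `a` forests has
average degree at most `2a` on every vertex subset. By Markov's inequality at most a `2/(2+ε)`
fraction of the current vertices can have degree at least `(2+ε)a`; iterating, `|S t|` is at
most `(2/(2+ε))^t · n`, which drops below `1` once `t > log n / log((2+ε)/2)`.
-/

open Classical Finset

/-- A graph `G` has arboricity at most `a` if its edge set can be partitioned into
at most `a` forests, i.e. there are `a` acyclic subgraphs of `G` with pairwise disjoint
edge sets whose union covers every edge of `G`. -/
def HasArboricityLE {V : Type*} (G : SimpleGraph V) (a : ℕ) : Prop :=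
  ∃ F : Fin a → SimpleGraph V,
    (∀ i, (F i).IsAcyclic) ∧ (∀ i, F i ≤ G) ∧
    (Pairwise fun i j => Disjoint (F i).edgeSet (F j).edgeSet) ∧
    ∀ e ∈ G.edgeSet, ∃ i, e ∈ (F i).edgeSet

namespace SimpleGraph

variable {V : Type*} {F : SimpleGraph V}

theorem IsAcyclic.card_edgeFinset_le [Fintype V] [Fintype F.edgeSet] (hF : F.IsAcyclic) :
    #F.edgeFinset ≤ Fintype.card V := by
  cases isEmpty_or_nonempty V
  · simp [edgeFinset_eq_empty.2 (Subsingleton.elim F ⊥)]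
  obtain ⟨T, hFT, hT⟩ := (⊤ : SimpleGraph V).exists_maximal_isAcyclic_of_le_isAcyclic le_top hF
  have hTree : T.IsTree := (connected_top.maximal_le_isAcyclic_iff_isTree le_top).1 hT
  have := Fintype.ofFinite T.edgeSet
  calc #F.edgeFinset ≤ #T.edgeFinset := card_le_card (edgeFinset_mono hFT)
    _ ≤ Fintype.card V := by have := hTree.card_edgeFinset; omega

theorem degree_induce_finset [DecidableRel F.Adj] (U : Finset V) (x : (U : Set V)) :
    (F.induce U).degree x = #(U.filter (F.Adj x)) := by
  rw [← card_neighborFinset_eq_degree]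
  refine card_nbij' Subtype.val (fun w => if h : w ∈ U then ⟨w, h⟩ else x) ?_ ?_ ?_ ?_ <;>
    intro w <;> simp +contextual

theorem IsAcyclic.sum_card_filter_adj_le [DecidableRel F.Adj] (hF : F.IsAcyclic)
    (U : Finset V) : ∑ v ∈ U, #(U.filter (F.Adj v)) ≤ 2 * #U := by
  calc ∑ v ∈ U, #(U.filter (F.Adj v)) = ∑ x : (U : Set V), (F.induce U).degree x := by
        simp only [degree_induce_finset]; exact (sum_coe_sort U _).symm
    _ = 2 * #(F.induce U).edgeFinset := sum_degrees_eq_twice_card_edges _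
    _ ≤ 2 * #U := by
        have := (hF.induce (U : Set V)).card_edgeFinset_le
        simp only [Finset.coe_sort_coe, Fintype.card_coe] at this
        omega

end SimpleGraph

theorem HasArboricityLE.sum_card_filter_adj_le {V : Type*} {G : SimpleGraph V}
    [DecidableRel G.Adj] {a : ℕ} (hG : HasArboricityLE G a) (U : Finset V) :
    ∑ v ∈ U, #(U.filter (G.Adj v)) ≤ 2 * a * #U := by
  obtain ⟨F, hacyclic, -, -, hcover⟩ := hG
  have hsplit (v : V) :
      #(U.filter (G.Adj v)) ≤ ∑ i, #(U.filter ((F i).Adj v)) := by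
    refine (card_le_card fun w hw => ?_).trans card_biUnion_le
    obtain ⟨hwU, hvw⟩ := mem_filter.1 hw
    obtain ⟨i, hi⟩ := hcover s(v, w) hvw
    exact mem_biUnion.2 ⟨i, mem_univ _, mem_filter.2 ⟨hwU, hi⟩⟩
  calc ∑ v ∈ U, #(U.filter (G.Adj v))
      ≤ ∑ v ∈ U, ∑ i, #(U.filter ((F i).Adj v)) := sum_le_sum fun v _ => hsplit v
    _ = ∑ i, ∑ v ∈ U, #(U.filter ((F i).Adj v)) := sum_comm
    _ ≤ ∑ _i : Fin a, 2 * #U := sum_le_sum fun i _ => (hacyclic i).sum_card_filter_adj_le U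
    _ = 2 * a * #U := by simp only [sum_const, card_univ, Fintype.card_fin, smul_eq_mul]; ring

theorem HasArboricityLE.card_filter_degree_ge_le {V : Type*}
    {G : SimpleGraph V} [DecidableRel G.Adj] {a : ℕ} (ha : 1 ≤ a) (hG : HasArboricityLE G a)
    {ε : ℝ} (hε : 0 < ε) (U : Finset V) :
    (#(U.filter fun v => (2 + ε) * (a : ℝ) ≤ #(U.filter (G.Adj v))) : ℝ)
      ≤ 2 / (2 + ε) * #U := by
  set T := U.filter fun v => (2 + ε) * (a : ℝ) ≤ #(U.filter (G.Adj v))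
  have hmarkov : #T * ((2 + ε) * a) ≤ ∑ v ∈ T, (#(U.filter (G.Adj v)) : ℝ) :=
    card_nsmul_le_sum T _ _ (fun v hv => (mem_filter.1 hv).2) |>.trans_eq' (nsmul_eq_mul _ _)
  have hsum : ∑ v ∈ T, (#(U.filter (G.Adj v)) : ℝ) ≤ 2 * a * #U := by
    calc ∑ v ∈ T, (#(U.filter (G.Adj v)) : ℝ) ≤ ∑ v ∈ U, (#(U.filter (G.Adj v)) : ℝ) :=
          sum_le_sum_of_subset_of_nonneg (filter_subset _ _) fun _ _ _ => Nat.cast_nonneg _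
      _ ≤ 2 * a * #U := by exact_mod_cast hG.sum_card_filter_adj_le U
  have ha' : (0 : ℝ) < a := by exact_mod_cast ha
  rw [div_mul_eq_mul_div, le_div_iff₀ (by linarith)]
  nlinarith

theorem pow_inv_mul_lt_one_of_log_div_log_lt {r x : ℝ} {t : ℕ} (hr : 1 < r) (hx : 0 ≤ x)
    (h : Real.log x / Real.log r < t) : r⁻¹ ^ t * x < 1 := by
  rcases hx.eq_or_lt with rfl | hx
  · simp
  rw [inv_pow, inv_mul_lt_one₀ (by positivity)]
  exact (Real.lt_pow_iff_log_lt hx (by linarith)).2 ((div_lt_iff₀ (Real.log_pos hr)).1 h)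

theorem arboricity_peeling_process_general {V : Type*} [Fintype V]
    (G : SimpleGraph V) [DecidableRel G.Adj] (a : ℕ) (ha : 1 ≤ a)
    (hG : HasArboricityLE G a) (ε : ℝ) (hε : 0 < ε)
    (S : ℕ → Finset V) (hS0 : S 0 = Finset.univ)
    (hSstep : ∀ i, S (i + 1)
      = (S i).filter fun v => (2 + ε) * (a : ℝ) ≤ (((S i).filter fun w => G.Adj v w).card : ℝ)) :
    (∀ i, ((S (i + 1)).card : ℝ) ≤ (2 / (2 + ε)) * ((S i).card : ℝ))
    ∧ (∀ t : ℕ, (2 / (2 + ε)) ^ t * (Fintype.card V : ℝ) < 1 → S t = ∅)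
    ∧ (∀ t : ℕ,
        Real.log (Fintype.card V : ℝ) / Real.log ((2 + ε) / 2) < (t : ℝ) → S t = ∅) := by
  have hshrink (i : ℕ) : ((S (i + 1)).card : ℝ) ≤ 2 / (2 + ε) * (S i).card := by
    rw [hSstep i]
    exact hG.card_filter_degree_ge_le ha hε (S i)
  have hempty (t : ℕ) (ht : (2 / (2 + ε)) ^ t * (Fintype.card V : ℝ) < 1) : S t = ∅ := by
    have hdecay := le_geom (u := fun i => ((S i).card : ℝ)) (by positivity) t fun i _ => hshrink i
    simp only [hS0, card_univ] at hdecay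
    exact card_eq_zero.1 (Nat.lt_one_iff.1 (by exact_mod_cast hdecay.trans_lt ht))
  refine ⟨hshrink, hempty, fun t ht => hempty t ?_⟩
  rw [← inv_div]
  exact pow_inv_mul_lt_one_of_log_div_log_lt (by linarith) (Nat.cast_nonneg _) ht

/-- Peeling process of the Barenboim-Elkin orientation algorithm: start with all vertices
(`S 0 = V`), and at each round keep only the vertices whose degree inside the current
induced subgraph is at least `(2+ε)·a`.  If `G` has arboricity at most `a ≥ 1`, then each
round keeps at most a `2/(2+ε)` fraction of the vertices; consequently `S t` is empty
whenever `(2/(2+ε))^t · n < 1`, so the process empties the graph within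
`log n / log((2+ε)/2)` rounds. -/
theorem arboricity_peeling_process {V : Type*} [Fintype V] [DecidableEq V]
    (G : SimpleGraph V) [DecidableRel G.Adj] (a : ℕ) (ha : 1 ≤ a)
    (hG : HasArboricityLE G a) (ε : ℝ) (hε : 0 < ε)
    (S : ℕ → Finset V) (hS0 : S 0 = Finset.univ)
    (hSstep : ∀ i, S (i + 1)
      = (S i).filter fun v => (2 + ε) * (a : ℝ) ≤ (((S i).filter fun w => G.Adj v w).card : ℝ)) :
    (∀ i, ((S (i + 1)).card : ℝ) ≤ (2 / (2 + ε)) * ((S i).card : ℝ))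
    ∧ (∀ t : ℕ, (2 / (2 + ε)) ^ t * (Fintype.card V : ℝ) < 1 → S t = ∅)
    ∧ (∀ t : ℕ,
        Real.log (Fintype.card V : ℝ) / Real.log ((2 + ε) / 2) < (t : ℝ) → S t = ∅) :=
  arboricity_peeling_process_general G a ha hG ε hε S hS0 hSstep
end

section
/- Let G be a finite simple graph with m edges and arboricity at most α (the edge set of G partitions into at most α forests), where α ≥ 1 is an integer. Then Σ_{v ∈ V} e(G[N(v)]) ≤ 2·α·m, where e(G[N(v)]) is the number of edges of the subgraph of G induced on the neighborhood N(v) of v. -/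
/-!
A forest on `k` vertices has fewer than `k` edges. The edges of `G` inside `N(v)` are covered by
the `a` forests restricted to `N(v)`, so there are at most `a · deg v` of them; summing over `v`
and using `∑ deg v = 2m` gives the bound.
-/

open Classical Finset

namespace SimpleGraph

variable {V : Type*} {G : SimpleGraph V}

theorem IsAcyclic.card_edgeFinset_le_s9 [Fintype V] [Fintype G.edgeSet] (hG : G.IsAcyclic) :
    #G.edgeFinset ≤ Fintype.card V := by
  cases isEmpty_or_nonempty V
  · simp [edgeFinset_eq_empty.mpr (Subsingleton.elim G ⊥)]
  obtain ⟨T, hGT, -, hT⟩ := connected_top.exists_isTree_le_of_le_of_isAcyclic le_top hG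
  have := hT.card_edgeFinset
  have := card_le_card (edgeFinset_mono hGT)
  omega

end SimpleGraph

namespace HasArboricityLE

variable {V : Type*} {G : SimpleGraph V} {a : ℕ}

theorem induce (hG : HasArboricityLE G a) (s : Set V) :
    HasArboricityLE (G.induce s) a := by
  obtain ⟨F, hF, hFG, hdisj, hcover⟩ := hG
  refine ⟨fun i => (F i).induce s, fun i => (hF i).induce s,
    fun i => SimpleGraph.comap_monotone _ (hFG i), fun i j hij => ?_, fun e he => ?_⟩
  · refine Set.disjoint_left.mpr ?_
    rintro ⟨x, y⟩ hi hj
    exact Set.disjoint_left.mp (hdisj hij) (show s(x.1, y.1) ∈ (F i).edgeSet from hi) hj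
  · induction e using Sym2.ind with
    | h x y => exact hcover s(x.1, y.1) he

theorem card_edgeFinset_le_s9 [Fintype V] [DecidableRel G.Adj]
    (hG : HasArboricityLE G a) : #G.edgeFinset ≤ a * Fintype.card V := by
  obtain ⟨F, hF, -, -, hcover⟩ := hG
  calc #G.edgeFinset ≤ #(univ.biUnion fun i => (F i).edgeFinset) :=
        card_le_card fun e he => by
          obtain ⟨i, hi⟩ := hcover e (SimpleGraph.mem_edgeFinset.mp he)
          exact mem_biUnion.mpr ⟨i, mem_univ i, SimpleGraph.mem_edgeFinset.mpr hi⟩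
    _ ≤ ∑ i, #(F i).edgeFinset := card_biUnion_le
    _ ≤ ∑ _i : Fin a, Fintype.card V := sum_le_sum fun i _ => (hF i).card_edgeFinset_le_s9
    _ = a * Fintype.card V := by simp

theorem card_filter_edgeFinset_subset_le [Fintype V] [DecidableEq V]
    [DecidableRel G.Adj] (hG : HasArboricityLE G a) (S : Finset V) :
    #{e ∈ G.edgeFinset | ∀ u ∈ e, u ∈ S} ≤ a * #S := by
  have hinduce : {e ∈ G.edgeFinset | ∀ u ∈ e, u ∈ S} =
      (G.induce (S : Set V)).edgeFinset.map
        (Function.Embedding.subtype (· ∈ (S : Set V))).sym2Map := by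
    convert (SimpleGraph.map_edgeFinset_induce (G := G) (s := (S : Set V))).symm using 2
    · ext e
      simp [mem_sym2_iff]
    · congr!
  rw [hinduce, card_map]
  simpa using (hG.induce S).card_edgeFinset_le_s9

end HasArboricityLE

theorem sum_neighborhood_edges_le_general {V : Type*} [Fintype V] [DecidableEq V]
    (G : SimpleGraph V) [DecidableRel G.Adj] (a : ℕ)
    (hG : HasArboricityLE G a) :
    ∑ v : V, (G.edgeFinset.filter fun e => ∀ u ∈ e, u ∈ G.neighborFinset v).card
      ≤ 2 * a * G.edgeFinset.card := by
  calc ∑ v : V, (G.edgeFinset.filter fun e => ∀ u ∈ e, u ∈ G.neighborFinset v).card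
      ≤ ∑ v : V, a * G.degree v := sum_le_sum fun v _ => by
        simpa using hG.card_filter_edgeFinset_subset_le (G.neighborFinset v)
    _ = 2 * a * #G.edgeFinset := by rw [← mul_sum, G.sum_degrees_eq_twice_card_edges]; ring

/-- If `G` has `m` edges and arboricity at most `a ≥ 1`, then the total number of edges of the
subgraphs induced on the vertex neighborhoods satisfies `Σ_{v ∈ V} e(G[N(v)]) ≤ 2·a·m`. -/
theorem sum_neighborhood_edges_le {V : Type*} [Fintype V] [DecidableEq V]
    (G : SimpleGraph V) [DecidableRel G.Adj] (a : ℕ) (ha : 1 ≤ a)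
    (hG : HasArboricityLE G a) :
    ∑ v : V, (G.edgeFinset.filter fun e => ∀ u ∈ e, u ∈ G.neighborFinset v).card
      ≤ 2 * a * G.edgeFinset.card :=
  sum_neighborhood_edges_le_general G a hG
end

section
/- Let G be a finite simple graph with m edges and arboricity at most α (the edge set of G partitions into at most α forests), where α ≥ 1 is an integer. Then Σ_{{u,v} ∈ E(G)} min(deg(u), deg(v)) ≤ 2·α·m, where the sum is over the edges of G and deg denotes degree in G. -/
open Classical Finset

/-!
Root every component of a forest and send each edge to its endpoint farther from the root.
This is injective, since a vertex has only one neighbour closer to the root, so summing over the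
edges of a forest any weight bounded by a nonnegative weight `c` of both endpoints gives at most
`∑ v, c v`. For `min (deg u) (deg w)` this is `∑ v, deg v = 2m`, and the `a` forests of the
partition contribute `2am` in total.
-/

namespace SimpleGraph

variable {V : Type*} {F : SimpleGraph V}

theorem IsAcyclic.eq_penultimate_of_dist_add_one (hF : F.IsAcyclic) {r v w : V}
    {p : F.Walk r v} (hp : p.IsPath) (hvw : F.Adj v w) (hdist : F.dist r w + 1 = F.dist r v) :
    w = p.penultimate := by
  -- a shortest path to `w` avoids `v`, so it extends along `w - v` to the unique path to `v`
  obtain ⟨q, hq, hq_len⟩ := (p.reachable.trans hvw.reachable).exists_path_of_dist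
  have hv : v ∉ q.support := fun hv => by
    have := F.dist_le (q.takeUntil v hv)
    have := q.length_takeUntil_le_length hv
    omega
  exact hF.eq_penultimate_of_adj_end hp hvw
    (hF.mem_support_of_ne_mem_support_of_adj_of_isPath hp hq hvw hv)

theorem IsAcyclic.eq_of_dist_add_one_eq (hF : F.IsAcyclic) {r v w w' : V} (hr : F.Reachable r v)
    (hw : F.Adj v w) (hw' : F.Adj v w') (h : F.dist r w + 1 = F.dist r v)
    (h' : F.dist r w' + 1 = F.dist r v) : w = w' := by
  obtain ⟨p, hp, -⟩ := hr.exists_path_of_dist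
  rw [hF.eq_penultimate_of_dist_add_one hp hw h, hF.eq_penultimate_of_dist_add_one hp hw' h']

theorem IsAcyclic.exists_injective_edgeSet (hF : F.IsAcyclic) :
    ∃ f : F.edgeSet → V, Function.Injective f ∧ ∀ e : F.edgeSet, f e ∈ (e : Sym2 V) := by
  let root : V → V := fun v => (F.connectedComponentMk v).out
  have reachable_root : ∀ v, F.Reachable (root v) v := fun v =>
    ConnectedComponent.exact (F.connectedComponentMk v).out_eq
  have root_eq : ∀ {v w}, F.Adj v w → root v = root w := fun h => by
    simp only [root, ConnectedComponent.eq.mpr h.reachable]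
  have farther_end : ∀ e : F.edgeSet, ∃ v w, (e : Sym2 V) = s(v, w) ∧ F.Adj v w ∧
      F.dist (root v) w + 1 = F.dist (root v) v := by
    rintro ⟨e, he⟩
    induction e using Sym2.ind with | _ x y => ?_
    rcases hF.dist_eq_dist_add_one_of_adj_of_reachable (root x) he (reachable_root x) with h | h
    · exact ⟨x, y, rfl, he, h.symm⟩
    · exact ⟨y, x, Sym2.eq_swap, he.symm, root_eq he ▸ h.symm⟩
  choose f g hfg hadj hdist using farther_end
  refine ⟨f, fun e e' hee' => Subtype.ext ?_, fun e => hfg e ▸ Sym2.mem_mk_left _ _⟩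
  have hg : g e = g e' := by
    have h' := hdist e'
    rw [← hee'] at h'
    exact hF.eq_of_dist_add_one_eq (reachable_root _) (hadj e) (hee' ▸ hadj e') (hdist e) h'
  rw [hfg e, hfg e', hee', hg]

theorem IsAcyclic.sum_edgeFinset_le [Fintype V] [Fintype F.edgeSet] {M : Type*} [AddCommMonoid M]
    [PartialOrder M] [IsOrderedAddMonoid M] {w : Sym2 V → M} {c : V → M} (hF : F.IsAcyclic)
    (hc : ∀ v, 0 ≤ c v) (hwc : ∀ e ∈ F.edgeSet, ∀ v ∈ e, w e ≤ c v) :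
    ∑ e ∈ F.edgeFinset, w e ≤ ∑ v, c v := by
  obtain ⟨f, hf, hfe⟩ := hF.exists_injective_edgeSet
  calc ∑ e ∈ F.edgeFinset, w e = ∑ e : F.edgeSet, w e := sum_subtype _ (by simp) _
    _ ≤ ∑ e : F.edgeSet, c (f e) := sum_le_sum fun e _ => hwc e e.2 (f e) (hfe e)
    _ = ∑ v ∈ univ.image f, c v := (sum_image hf.injOn).symm
    _ ≤ ∑ v, c v := sum_le_univ_sum_of_nonneg hc

theorem _root_.HasArboricityLE.sum_edgeFinset_le [Fintype V] {G : SimpleGraph V}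
    [Fintype G.edgeSet] {a : ℕ} {M : Type*} [AddCommMonoid M] [PartialOrder M]
    [IsOrderedAddMonoid M] {w : Sym2 V → M} {c : V → M} (hG : HasArboricityLE G a)
    (hc : ∀ v, 0 ≤ c v) (hwc : ∀ e ∈ G.edgeSet, ∀ v ∈ e, w e ≤ c v) :
    ∑ e ∈ G.edgeFinset, w e ≤ a • ∑ v, c v := by
  obtain ⟨F, hF, hFG, hdisj, hcover⟩ := hG
  have hE : G.edgeFinset = univ.biUnion fun i => (F i).edgeFinset := by
    ext e
    simp only [mem_edgeFinset, mem_biUnion, mem_univ, true_and]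
    exact ⟨hcover e, fun ⟨i, he⟩ => edgeSet_mono (hFG i) he⟩
  calc ∑ e ∈ G.edgeFinset, w e = ∑ i, ∑ e ∈ (F i).edgeFinset, w e := by
        rw [hE, sum_biUnion]
        intro i _ j _ hij
        simpa [Function.onFun, ← disjoint_coe] using hdisj hij
    _ ≤ ∑ _i : Fin a, ∑ v, c v := sum_le_sum fun i _ =>
        (hF i).sum_edgeFinset_le hc fun e he => hwc e (edgeSet_mono (hFG i) he)
    _ = a • ∑ v, c v := by simp

end SimpleGraph

theorem sum_min_degree_le_general {V : Type*} [Fintype V]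
    (G : SimpleGraph V) [DecidableRel G.Adj] (a : ℕ)
    (hG : HasArboricityLE G a) :
    ∑ e ∈ G.edgeFinset,
        Sym2.lift ⟨fun u w => min (G.degree u) (G.degree w), fun u w => min_comm _ _⟩ e
      ≤ 2 * a * G.edgeFinset.card := by
  have min_le_degree : ∀ e ∈ G.edgeSet, ∀ v ∈ e,
      Sym2.lift ⟨fun u w => min (G.degree u) (G.degree w), fun u w => min_comm _ _⟩ e
        ≤ G.degree v := by
    rintro ⟨x, y⟩ - v hv
    rcases Sym2.mem_iff.mp hv with rfl | rfl
    exacts [min_le_left _ _, min_le_right _ _]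
  calc _ ≤ a • ∑ v, G.degree v := hG.sum_edgeFinset_le (fun _ => Nat.zero_le _) min_le_degree
    _ = 2 * a * G.edgeFinset.card := by
      rw [G.sum_degrees_eq_twice_card_edges, smul_eq_mul]
      ring

/-- (Chiba–Nishizeki.)  If `G` has `m` edges and arboricity at most `a ≥ 1`, then
`Σ_{{u,v} ∈ E(G)} min(deg(u), deg(v)) ≤ 2·a·m`. -/
theorem sum_min_degree_le {V : Type*} [Fintype V] [DecidableEq V]
    (G : SimpleGraph V) [DecidableRel G.Adj] (a : ℕ) (ha : 1 ≤ a)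
    (hG : HasArboricityLE G a) :
    ∑ e ∈ G.edgeFinset,
        Sym2.lift ⟨fun u w => min (G.degree u) (G.degree w), fun u w => min_comm _ _⟩ e
      ≤ 2 * a * G.edgeFinset.card :=
  sum_min_degree_le_general G a hG
end

section
/- Let G be a finite simple graph with m edges, and suppose there is a linear order ≺ on the vertices such that every vertex has at most D neighbors that are larger than it under ≺. Then for every integer k ≥ 2, the number of k-cliques of G is at most m · D^(k−2). -/
open Classical Finset

/-!
Removing the largest vertex `b` of a `(k + 1)`-clique leaves a `k`-clique `s`, and `b` is an
out-neighbour of every vertex of `s`. Hence a `k`-clique (`k ≥ 1`) extends to at most `D`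
cliques of size `k + 1`, and the bound follows by induction from `k = 2`, where cliques are edges.
-/

namespace SimpleGraph

variable {V : Type*} [Fintype V] [DecidableEq V] (G : SimpleGraph V) [DecidableRel G.Adj]

theorem card_cliqueFinset_two_le_card_edgeFinset : #(G.cliqueFinset 2) ≤ #G.edgeFinset := by
  refine (card_le_card fun s hs => ?_).trans (card_image_le (f := Sym2.toFinset))
  obtain ⟨hs, hcard⟩ := mem_cliqueFinset_iff.1 hs
  obtain ⟨a, b, hab, rfl⟩ := card_eq_two.1 hcard
  exact mem_image.2 ⟨s(a, b), mem_edgeFinset.2 (hs (by simp) (by simp) hab), Sym2.toFinset_mk_eq⟩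

section Orientation

variable [LinearOrder V]

/-- The out-neighbourhood of `v` when every edge is oriented towards its larger endpoint. -/
def upperNeighborFinset (v : V) : Finset V := {w | G.Adj v w ∧ v < w}

def commonUpperNeighborFinset (s : Finset V) : Finset V := {w | ∀ v ∈ s, G.Adj v w ∧ v < w}

theorem commonUpperNeighborFinset_subset {s : Finset V} {v : V} (hv : v ∈ s) :
    G.commonUpperNeighborFinset s ⊆ G.upperNeighborFinset v := fun w hw => by
  simp only [commonUpperNeighborFinset, upperNeighborFinset, mem_filter, mem_univ,
    true_and] at hw ⊢
  exact hw v hv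

theorem cliqueFinset_succ_subset_biUnion (n : ℕ) :
    G.cliqueFinset (n + 1) ⊆ (G.cliqueFinset n).biUnion fun s =>
      (G.commonUpperNeighborFinset s).image (insert · s) := by
  intro t ht
  have hclique := mem_cliqueFinset_iff.1 ht
  have hne : t.Nonempty := card_pos.1 (hclique.card_eq ▸ n.succ_pos)
  set b := t.max' hne
  have hb : b ∈ t := t.max'_mem hne
  refine mem_biUnion.2 ⟨t.erase b, mem_cliqueFinset_iff.2 (hclique.erase_of_mem hb), ?_⟩
  refine mem_image.2 ⟨b, ?_, insert_erase hb⟩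
  simp only [commonUpperNeighborFinset, mem_filter, mem_univ, true_and]
  intro v hv
  obtain ⟨hvb, hvt⟩ := mem_erase.1 hv
  exact ⟨hclique.isClique hvt hb hvb, lt_of_le_of_ne (t.le_max' v hvt) hvb⟩

theorem card_cliqueFinset_succ_le {D : ℕ} (hD : ∀ v, #(G.upperNeighborFinset v) ≤ D)
    {n : ℕ} (hn : n ≠ 0) : #(G.cliqueFinset (n + 1)) ≤ #(G.cliqueFinset n) * D := by
  refine (card_le_card (G.cliqueFinset_succ_subset_biUnion n)).trans
    (card_biUnion_le_card_mul _ _ _ fun s hs => ?_)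
  obtain ⟨v, hv⟩ : s.Nonempty :=
    card_pos.1 ((mem_cliqueFinset_iff.1 hs).card_eq ▸ Nat.pos_of_ne_zero hn)
  calc #((G.commonUpperNeighborFinset s).image (insert · s))
      ≤ #(G.commonUpperNeighborFinset s) := card_image_le
    _ ≤ #(G.upperNeighborFinset v) := card_le_card (G.commonUpperNeighborFinset_subset hv)
    _ ≤ D := hD v

theorem card_cliqueFinset_le_card_edgeFinset_mul_pow {D : ℕ}
    (hD : ∀ v, #(G.upperNeighborFinset v) ≤ D) {k : ℕ} (hk : 2 ≤ k) :
    #(G.cliqueFinset k) ≤ #G.edgeFinset * D ^ (k - 2) := by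
  induction k, hk using Nat.le_induction with
  | base => simpa using G.card_cliqueFinset_two_le_card_edgeFinset
  | succ k hk ih =>
    calc #(G.cliqueFinset (k + 1)) ≤ #(G.cliqueFinset k) * D :=
          G.card_cliqueFinset_succ_le hD (by omega)
      _ ≤ #G.edgeFinset * D ^ (k - 2) * D := Nat.mul_le_mul_right D ih
      _ = #G.edgeFinset * D ^ (k + 1 - 2) := by
          rw [mul_assoc, ← pow_succ, Nat.sub_add_comm hk]

end Orientation

end SimpleGraph

/-- If there is a linear order on the vertices of `G` under which every vertex has at most `D`
neighbors larger than it (a `D`-orientation), then for every `k ≥ 2` the number of `k`-cliques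
of `G` is at most `m · D^(k−2)`, where `m` is the number of edges of `G`. -/
theorem cliqueCount_le_of_orientation {V : Type*} [Fintype V] [DecidableEq V]
    (G : SimpleGraph V) [DecidableRel G.Adj] (D : ℕ) (L : LinearOrder V)
    (hL : ∀ v : V, (Finset.univ.filter fun w => G.Adj v w ∧ L.lt v w).card ≤ D) :
    ∀ k : ℕ, 2 ≤ k → (G.cliqueFinset k).card ≤ G.edgeFinset.card * D ^ (k - 2) := by
  let _ := L
  exact fun k hk => G.card_cliqueFinset_le_card_edgeFinset_mul_pow hL hk
end

section
/- Let G be a finite simple graph and k ≥ 1 an integer. Suppose a nonempty subset U of vertices maximizes the k-clique density c_k(G[W]) / |W| over all nonempty subsets W of vertices (i.e., G[U] is a k-clique densest subgraph of G). Then every vertex v ∈ U is contained in at least c_k(G[U]) / |U| many k-cliques of G[U]. -/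
open Classical Finset

/-- `cliquesIn G k W` is the number of `k`-cliques of the induced subgraph `G[W]`, i.e. the
number of `k`-cliques of `G` all of whose vertices lie in `W`. -/
noncomputable def cliquesIn {V : Type*} [Fintype V] [DecidableEq V] (G : SimpleGraph V)
    [DecidableRel G.Adj] (k : ℕ) (W : Finset V) : ℕ :=
  ((G.cliqueFinset k).filter fun s => s ⊆ W).card

/-- `kCliqueDeg G k W v` is the number of `k`-cliques of the induced subgraph `G[W]`
that contain the vertex `v`. -/
noncomputable def kCliqueDeg {V : Type*} [Fintype V] [DecidableEq V] (G : SimpleGraph V)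
    [DecidableRel G.Adj] (k : ℕ) (W : Finset V) (v : V) : ℕ :=
  ((G.cliqueFinset k).filter fun s => s ⊆ W ∧ v ∈ s).card

/-!
Deleting a vertex `v` from a densest `U` destroys exactly the `kCliqueDeg G k U v` cliques through
`v` and leaves a set whose density is still at most the optimum `d`, so
`c_k(U) - deg(v) ≤ d (|U| - 1) = c_k(U) - d`.
-/

section

variable {V : Type*} [Fintype V] [DecidableEq V] (G : SimpleGraph V) [DecidableRel G.Adj]

theorem cliquesIn_eq_kCliqueDeg_add_cliquesIn_erase (k : ℕ) (U : Finset V) (v : V) :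
    cliquesIn G k U = kCliqueDeg G k U v + cliquesIn G k (U.erase v) := by
  have hsplit := card_filter_add_card_filter_not
    (s := (G.cliqueFinset k).filter (· ⊆ U)) (p := fun s => v ∈ s)
  rw [filter_filter, filter_filter] at hsplit
  have hrest : ((G.cliqueFinset k).filter fun s => s ⊆ U ∧ v ∉ s)
      = (G.cliqueFinset k).filter (· ⊆ U.erase v) :=
    filter_congr fun s _ => by simp only [subset_erase]
  rw [cliquesIn, kCliqueDeg, cliquesIn, ← hsplit, hrest]

theorem cliquesIn_empty {k : ℕ} (hk : k ≠ 0) : cliquesIn G k ∅ = 0 := by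
  rw [cliquesIn, card_eq_zero, filter_eq_empty_iff]
  intro s hs hsub
  have hcard := (SimpleGraph.mem_cliqueFinset_iff.mp hs).card_eq
  rw [subset_empty.mp hsub, card_empty] at hcard
  exact hk hcard.symm

theorem cliquesIn_le_mul_card {k : ℕ} (hk : k ≠ 0) {d : ℝ}
    (hdensity : ∀ W : Finset V, W.Nonempty → (cliquesIn G k W : ℝ) / W.card ≤ d)
    (W : Finset V) : (cliquesIn G k W : ℝ) ≤ d * W.card := by
  rcases W.eq_empty_or_nonempty with rfl | hW
  · simp [cliquesIn_empty G hk]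
  · exact (div_le_iff₀ (by exact_mod_cast hW.card_pos)).mp (hdensity W hW)

end

theorem densest_subgraph_min_clique_degree_general {V : Type*} [Fintype V] [DecidableEq V]
    (G : SimpleGraph V) [DecidableRel G.Adj] (k : ℕ) (hk : 1 ≤ k)
    (U : Finset V)
    (hmax : ∀ W : Finset V, W.Nonempty →
      (cliquesIn G k W : ℝ) / (W.card : ℝ) ≤ (cliquesIn G k U : ℝ) / (U.card : ℝ)) :
    ∀ v ∈ U, (cliquesIn G k U : ℝ) / (U.card : ℝ) ≤ (kCliqueDeg G k U v : ℝ) := by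
  intro v hv
  have hU : U.Nonempty := ⟨v, hv⟩
  set d : ℝ := (cliquesIn G k U : ℝ) / U.card
  have hcliques : (cliquesIn G k U : ℝ) = d * U.card :=
    (div_mul_cancel₀ _ (by exact_mod_cast hU.card_pos.ne')).symm
  have hsplit : (cliquesIn G k U : ℝ) = kCliqueDeg G k U v + cliquesIn G k (U.erase v) := by
    exact_mod_cast cliquesIn_eq_kCliqueDeg_add_cliquesIn_erase G k U v
  have hrest := cliquesIn_le_mul_card G (by omega) hmax (U.erase v)
  have hcard : ((U.erase v).card : ℝ) = U.card - 1 := by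
    rw [card_erase_of_mem hv, Nat.cast_pred hU.card_pos]
  rw [hcard] at hrest
  linarith

/-- If a nonempty vertex set `U` maximizes the `k`-clique density `c_k(G[W])/|W|` over all
nonempty vertex sets `W` (i.e. `G[U]` is a `k`-clique densest subgraph), then every vertex
`v ∈ U` is contained in at least `c_k(G[U])/|U|` many `k`-cliques of `G[U]`. -/
theorem densest_subgraph_min_clique_degree {V : Type*} [Fintype V] [DecidableEq V]
    (G : SimpleGraph V) [DecidableRel G.Adj] (k : ℕ) (hk : 1 ≤ k)
    (U : Finset V) (hU : U.Nonempty)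
    (hmax : ∀ W : Finset V, W.Nonempty →
      (cliquesIn G k W : ℝ) / (W.card : ℝ) ≤ (cliquesIn G k U : ℝ) / (U.card : ℝ)) :
    ∀ v ∈ U, (cliquesIn G k U : ℝ) / (U.card : ℝ) ≤ (kCliqueDeg G k U v : ℝ) :=
  densest_subgraph_min_clique_degree_general G k hk U hmax
end

section
/- Let G be a finite simple graph and k ≥ 1 an integer, and let ε > 0 be a real number. Suppose a nonempty subset U of vertices maximizes the k-clique density c_k(G[W]) / |W| over all nonempty subsets W of vertices. Suppose S is a subset of vertices with U ⊆ S, and suppose some vertex v ∈ U is contained in at most k·(1+ε)·c_k(G[S])/|S| many k-cliques of G[S]. Then c_k(G[S]) / |S| ≥ (1/(k·(1+ε))) · c_k(G[U]) / |U|; that is, the current subgraph at the round in which the first vertex of the optimal set is removed by threshold peeling is a 1/(k(1+ε))-approximation to the k-clique densest subgraph. -/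
open Classical Finset

/-- Let `U` be a nonempty vertex set maximizing the `k`-clique density over all nonempty vertex
sets (`k ≥ 1`, `ε > 0`).  If `S` is a vertex set containing `U` and some vertex `v ∈ U` is
contained in at most `k·(1+ε)·c_k(G[S])/|S|` many `k`-cliques of `G[S]`, then
`c_k(G[S])/|S| ≥ (1/(k(1+ε)))·c_k(G[U])/|U|`; that is, the subgraph at the round in which the
first vertex of the optimal set is removed by threshold peeling is a `1/(k(1+ε))`-approximation
to the `k`-clique densest subgraph. -/
theorem approx_peeling_density {V : Type*} [Fintype V] [DecidableEq V]
    (G : SimpleGraph V) [DecidableRel G.Adj] (k : ℕ) (hk : 1 ≤ k)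
    (ε : ℝ) (hε : 0 < ε) (U : Finset V) (hU : U.Nonempty)
    (hmax : ∀ W : Finset V, W.Nonempty →
      (cliquesIn G k W : ℝ) / (W.card : ℝ) ≤ (cliquesIn G k U : ℝ) / (U.card : ℝ))
    (Sset : Finset V) (hUS : U ⊆ Sset) (v : V) (hv : v ∈ U)
    (hdeg : (kCliqueDeg G k Sset v : ℝ)
      ≤ (k : ℝ) * (1 + ε) * ((cliquesIn G k Sset : ℝ) / (Sset.card : ℝ))) :
    (1 / ((k : ℝ) * (1 + ε))) * ((cliquesIn G k U : ℝ) / (U.card : ℝ))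
      ≤ (cliquesIn G k Sset : ℝ) / (Sset.card : ℝ) := by

  classical
  have hkpos : (0:ℝ) < (k:ℝ) * (1 + ε) := by positivity
  have hUcard : (0:ℝ) < (U.card : ℝ) := by
    exact_mod_cast Finset.card_pos.mpr hU
  -- split cliques in U by whether they contain v
  have hsplit : cliquesIn G k U = cliquesIn G k (U.erase v) + kCliqueDeg G k U v := by
    unfold cliquesIn kCliqueDeg
    rw [← Finset.filter_filter]
    have := Finset.card_filter_add_card_filter_not
      (s := (G.cliqueFinset k).filter fun s => s ⊆ U) (p := fun s => v ∈ s)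
    rw [← this, add_comm]
    congr 1
    rw [Finset.filter_filter]
    congr 1
    apply Finset.filter_congr
    intro s hs
    simp [Finset.subset_erase, and_comm]
  -- key: density of U ≤ clique degree of v in U
  have hkey : (cliquesIn G k U : ℝ) / (U.card : ℝ) ≤ (kCliqueDeg G k U v : ℝ) := by
    by_cases hone : U.erase v = ∅
    · -- U = {v}, every k-clique in U contains v
      have hU1 : U = {v} := by
        apply Finset.eq_singleton_iff_unique_mem.mpr
        refine ⟨hv, fun x hx => ?_⟩
        by_contra hne
        exact absurd (Finset.mem_erase.mpr ⟨hne, hx⟩) (by simp [hone])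
      have heq : cliquesIn G k U = kCliqueDeg G k U v := by
        unfold cliquesIn kCliqueDeg
        congr 1
        apply Finset.filter_congr
        intro s hs
        rw [SimpleGraph.mem_cliqueFinset_iff] at hs
        have hcard : s.card = k := hs.card_eq
        have hsne : s.Nonempty := Finset.card_pos.mp (by omega)
        constructor
        · intro hsub
          refine ⟨hsub, ?_⟩
          obtain ⟨x, hx⟩ := hsne
          have := hsub hx
          rw [hU1] at this
          simp at this
          rwa [← this]
        · intro h; exact h.1
      rw [heq, hU1]
      simp
    · -- erase v is nonempty, apply maximality
      have hne : (U.erase v).Nonempty := Finset.nonempty_of_ne_empty hone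
      have hmax' := hmax (U.erase v) hne
      have hcard : (U.erase v).card = U.card - 1 := Finset.card_erase_of_mem hv
      have hU2 : 2 ≤ U.card := by
        have := Finset.card_pos.mpr hne
        omega
      have hc1 : (0:ℝ) < ((U.card : ℝ) - 1) := by
        have : (2:ℝ) ≤ (U.card : ℝ) := by exact_mod_cast hU2
        linarith
      have hcardR : ((U.erase v).card : ℝ) = (U.card : ℝ) - 1 := by
        rw [hcard]
        have : (1:ℕ) ≤ U.card := by omega
        push_cast [this]
        ring
      rw [hcardR, div_le_div_iff₀ hc1 hUcard] at hmax'
      have hsplitR : (cliquesIn G k U : ℝ)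
          = (cliquesIn G k (U.erase v) : ℝ) + (kCliqueDeg G k U v : ℝ) := by
        exact_mod_cast congrArg (Nat.cast : ℕ → ℝ) hsplit
      rw [div_le_iff₀ hUcard]
      nlinarith [hmax', hsplitR]
  -- clique degree in U ≤ clique degree in S
  have hmono : (kCliqueDeg G k U v : ℝ) ≤ (kCliqueDeg G k Sset v : ℝ) := by
    have : kCliqueDeg G k U v ≤ kCliqueDeg G k Sset v := by
      unfold kCliqueDeg
      apply Finset.card_le_card
      intro s hs
      simp only [Finset.mem_filter] at hs ⊢
      exact ⟨hs.1, hs.2.1.trans hUS, hs.2.2⟩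
    exact_mod_cast this
  have hchain : (cliquesIn G k U : ℝ) / (U.card : ℝ)
      ≤ (k : ℝ) * (1 + ε) * ((cliquesIn G k Sset : ℝ) / (Sset.card : ℝ)) :=
    hkey.trans (hmono.trans hdeg)
  rw [one_div, inv_mul_le_iff₀ hkpos]
  linarith
end
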